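/- arXiv:1103.4475 — 2 statements merged into one kernel-verified Lean document; each statement's English description precedes it below -/
import Mathlib

section
/- Let â₁, â₂, â₃ be unit vectors in a real inner-product plane such that for all i ≠ j, c_ij := ⟨â_i, â_j⟩ satisfies 0 < |c_ij| < 1. Let n be a unit vector orthogonal to the plane. Define A_i := sqrt( c_jk / (c_jk - c_ij·c_ik) ) and B_i := A_i·sqrt( -c_ij·c_ik / c_jk ) for {i,j,k} = {1,2,3}, assuming the quantities under the square roots are nonnegative and c_jk - c_ij c_ik ≠ 0. Then the vectors e_i := A_i·â_i + B_i·n satisfy ⟨e_i, e_i⟩ = A_i² + B_i² = 1 and ⟨e_i, e_j⟩ = A_i A_j c_ij + B_i B_j = 0 for i ≠ j, provided the signs of the B_i are chosen so that B_i B_j = -A_i A_j c_ij. -/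
open RealInnerProductSpace

/-! Since `n` is a unit vector orthogonal to every `â_i`, the inner products of the `e_i`
split as `⟪e_i, e_j⟫ = A_i A_j c_ij + B_i B_j`. Off the diagonal this vanishes by the sign
choice, and on the diagonal the defining square roots give
`A_i² + B_i² = c_jk/(c_jk - c_ij c_ik) · (1 - c_ij c_ik / c_jk) = 1`. -/

theorem Fin.exists_ne_ne_ne (i : Fin 3) : ∃ p q : Fin 3, i ≠ p ∧ p ≠ q ∧ i ≠ q := by
  revert i
  decide

theorem sq_add_sq_eq_one_of_eq_sqrt {c d A B : ℝ} (hc : c ≠ 0) (hcd : c - d ≠ 0)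
    (hA_nonneg : 0 ≤ c / (c - d)) (hA : A = √(c / (c - d)))
    (hB_nonneg : 0 ≤ -d / c) (hB : |B| = A * √(-d / c)) :
    A ^ 2 + B ^ 2 = 1 := by
  have hA2 : A ^ 2 = c / (c - d) := by rw [hA, Real.sq_sqrt hA_nonneg]
  have hB2 : B ^ 2 = A ^ 2 * (-d / c) := by
    rw [← sq_abs, hB, mul_pow, Real.sq_sqrt hB_nonneg]
  rw [hB2, hA2]
  field_simp
  ring

theorem inner_smul_add_smul_of_inner_eq_zero {V : Type*} [NormedAddCommGroup V]
    [InnerProductSpace ℝ V] {x y n : V} (hx : ⟪x, n⟫ = 0) (hy : ⟪y, n⟫ = 0)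
    (α β γ δ : ℝ) :
    ⟪α • x + β • n, γ • y + δ • n⟫ = α * γ * ⟪x, y⟫ + β * δ * ⟪n, n⟫ := by
  have hy' : ⟪n, y⟫ = 0 := by rw [real_inner_comm, hy]
  simp only [inner_add_left, inner_add_right, real_inner_smul_left, real_inner_smul_right,
    hx, hy']
  ring

theorem orthonormal_triad_reconstruction_general
    {V : Type*} [NormedAddCommGroup V] [InnerProductSpace ℝ V]
    (a : Fin 3 → V) (n : V)
    (ha : ∀ i, ‖a i‖ = 1) (hn : ‖n‖ = 1)
    (han : ∀ i, ⟪a i, n⟫ = 0)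
    (c : Fin 3 → Fin 3 → ℝ) (hc : ∀ i j, c i j = ⟪a i, a j⟫)
    (hcb : ∀ i j, i ≠ j → 0 < |c i j| ∧ |c i j| < 1)
    (A B : Fin 3 → ℝ)
    (hA : ∀ i j k, i ≠ j → j ≠ k → i ≠ k →
      A i = Real.sqrt (c j k / (c j k - c i j * c i k)))
    (hAnn : ∀ i j k, i ≠ j → j ≠ k → i ≠ k →
      0 ≤ c j k / (c j k - c i j * c i k) ∧ c j k - c i j * c i k ≠ 0)
    (hB : ∀ i j k, i ≠ j → j ≠ k → i ≠ k →
      |B i| = A i * Real.sqrt (-(c i j * c i k) / c j k)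
        ∧ 0 ≤ -(c i j * c i k) / c j k)
    (hsign : ∀ i j, i ≠ j → B i * B j = -(A i * A j * c i j)) :
    ∀ i j, (A i ^ 2 + B i ^ 2 = 1
        ∧ ⟪A i • a i + B i • n, A i • a i + B i • n⟫ = 1)
      ∧ (i ≠ j → ⟪A i • a i + B i • n, A j • a j + B j • n⟫ = 0) := by
  intro i j
  obtain ⟨p, q, hip, hpq, hiq⟩ := Fin.exists_ne_ne_ne i
  have hcpq : c p q ≠ 0 := abs_pos.mp (hcb p q hpq).1
  have hsum : A i ^ 2 + B i ^ 2 = 1 :=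
    sq_add_sq_eq_one_of_eq_sqrt hcpq (hAnn i p q hip hpq hiq).2 (hAnn i p q hip hpq hiq).1
      (hA i p q hip hpq hiq) (hB i p q hip hpq hiq).2 (hB i p q hip hpq hiq).1
  have hnn : ⟪n, n⟫ = 1 := by rw [real_inner_self_eq_norm_sq, hn, one_pow]
  refine ⟨⟨hsum, ?_⟩, fun hij => ?_⟩
  · rw [inner_smul_add_smul_of_inner_eq_zero (han i) (han i), real_inner_self_eq_norm_sq,
      ha, hnn]
    linear_combination hsum
  · rw [inner_smul_add_smul_of_inner_eq_zero (han i) (han j), ← hc, hnn]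
    linear_combination hsign i j hij

/-- Proposition 5 of the paper: reconstruction of an orthonormal
triad e_i = A_i·â_i + B_i·n from unit vectors â₁,â₂,â₃ in a plane (with
0 < |c_ij| < 1 for c_ij = ⟨â_i,â_j⟩) and a unit normal n, where
A_i = sqrt(c_jk/(c_jk - c_ij c_ik)), |B_i| = A_i·sqrt(-c_ij c_ik / c_jk),
the quantities under the square roots being nonnegative, the denominators
nonzero, and the signs of the B_i chosen so that B_i B_j = -A_i A_j c_ij. -/
theorem orthonormal_triad_reconstruction
    {V : Type*} [NormedAddCommGroup V] [InnerProductSpace ℝ V]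
    (a : Fin 3 → V) (n : V)
    (ha : ∀ i, ‖a i‖ = 1) (hn : ‖n‖ = 1)
    (han : ∀ i, ⟪a i, n⟫ = 0)
    (hplane : ∃ v w : V, ∀ i, a i ∈ Submodule.span ℝ ({v, w} : Set V))
    (c : Fin 3 → Fin 3 → ℝ) (hc : ∀ i j, c i j = ⟪a i, a j⟫)
    (hcb : ∀ i j, i ≠ j → 0 < |c i j| ∧ |c i j| < 1)
    (A B : Fin 3 → ℝ)
    (hA : ∀ i j k, i ≠ j → j ≠ k → i ≠ k →
      A i = Real.sqrt (c j k / (c j k - c i j * c i k)))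
    (hAnn : ∀ i j k, i ≠ j → j ≠ k → i ≠ k →
      0 ≤ c j k / (c j k - c i j * c i k) ∧ c j k - c i j * c i k ≠ 0)
    (hB : ∀ i j k, i ≠ j → j ≠ k → i ≠ k →
      |B i| = A i * Real.sqrt (-(c i j * c i k) / c j k)
        ∧ 0 ≤ -(c i j * c i k) / c j k)
    (hsign : ∀ i j, i ≠ j → B i * B j = -(A i * A j * c i j)) :
    ∀ i j, (A i ^ 2 + B i ^ 2 = 1
        ∧ ⟪A i • a i + B i • n, A i • a i + B i • n⟫ = 1)
      ∧ (i ≠ j → ⟪A i • a i + B i • n, A j • a j + B j • n⟫ = 0) :=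
  orthonormal_triad_reconstruction_general a n ha hn han c hc hcb A B hA hAnn hB hsign
end

section
/- Let V be a 4-dimensional real vector space with Lorentzian form g, and u, n ∈ V with g(u,u) = -1, g(n,n) = 1, g(u,n) = 0. Let Σ be a symmetric bilinear form on V with Σ(u,·) = 0, diagonalized on the orthogonal complement of u by an orthonormal basis e₁,e₂,e₃ with eigenvalues 2φ₁, 2φ₂, 2φ₃, i.e. Σ = Σ_i 2φ_i ω^i⊗ω^i where ω^i is dual to e_i. Write e_i = e_i^⊤ + n_i n with n_i := g(e_i,n) ≠ 0 and g(e_i^⊤,n)=0. Then for i ≠ j ≠ k: 2φ_i = Σ_{h,l} Σ(e_h^⊤, e_l^⊤) δ^{hl} + (1/(n_j n_k))·Σ(e_j^⊤, e_k^⊤). -/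
/-!
Write `a i := g (e i) n`. Since `n ⟂ u` is a unit vector, `∑ a i ^ 2 = 1`, and the matrix of `Σ` on
the tangential projections is `T = P Φ P` with `Φ = diag (2 φ)` and `P = 1 - a aᵀ`. Hence
`tr T = ∑ 2 φ x (1 - a x ^ 2)`, while for `j ≠ k` one has `T j k = a j a k (∑ 2 φ x a x ^ 2 - 2 φ j - 2 φ k)`.
Dividing the latter by `a j a k` and adding the trace, the terms `a x ^ 2` cancel and only `2 φ i` survives.
-/

open Finset

section ProjectorAlgebra

variable {ι : Type*} [Fintype ι] [DecidableEq ι] (c a : ι → ℝ)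

theorem sum_mul_projector_sq_eq (ha : ∑ x, a x ^ 2 = 1) :
    ∑ h, ∑ x, c x * ((if x = h then 1 else 0) - a x * a h)
        * ((if x = h then 1 else 0) - a x * a h)
      = ∑ x, c x - ∑ x, c x * a x ^ 2 := by
  rw [sum_comm, ← sum_sub_distrib]
  refine sum_congr rfl fun x _ => ?_
  have hsq : ∀ h, ((if x = h then 1 else 0) - a x * a h) ^ 2
      = (if x = h then 1 - 2 * a x ^ 2 else 0) + a x ^ 2 * a h ^ 2 := by
    intro h
    split_ifs with hxh <;> [subst hxh; skip] <;> ring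
  have hrow : ∑ h, ((if x = h then 1 else 0) - a x * a h) ^ 2 = 1 - a x ^ 2 := by
    rw [sum_congr rfl fun h _ => hsq h, sum_add_distrib, sum_ite_eq, ← mul_sum, ha,
      if_pos (mem_univ x)]
    ring
  rw [← mul_one_sub, ← hrow, mul_sum]
  exact sum_congr rfl fun h _ => by ring

theorem sum_mul_projector_of_ne {j k : ι} (hjk : j ≠ k) :
    ∑ x, c x * ((if x = j then 1 else 0) - a x * a j) * ((if x = k then 1 else 0) - a x * a k)
      = a j * a k * (∑ x, c x * a x ^ 2 - c j - c k) := by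
  have hexpand : ∀ x, c x * ((if x = j then 1 else 0) - a x * a j)
        * ((if x = k then 1 else 0) - a x * a k)
      = a j * a k * (c x * a x ^ 2) - (if x = j then c j * a j * a k else 0)
          - (if x = k then c k * a j * a k else 0) := by
    intro x
    by_cases hxj : x = j <;> by_cases hxk : x = k <;> simp_all <;> ring
  simp only [hexpand, sum_sub_distrib, ← mul_sum, sum_ite_eq', mem_univ, if_true]
  ring

end ProjectorAlgebra

theorem Fin.sum_univ_three_of_ne {M : Type*} [AddCommMonoid M] (f : Fin 3 → M) {i j k : Fin 3}
    (hij : i ≠ j) (hjk : j ≠ k) (hik : i ≠ k) : ∑ x, f x = f i + f j + f k := by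
  fin_cases i <;> fin_cases j <;> fin_cases k <;> simp [Fin.sum_univ_three] at * <;> abel

theorem sum_sq_apply_eq_one_of_expansion {V ι : Type*} [AddCommGroup V] [Module ℝ V] [Fintype ι]
    (g : V →ₗ[ℝ] V →ₗ[ℝ] ℝ) (u n : V) (e : ι → V) (hnn : g n n = 1) (hun : g u n = 0)
    (hn : n = (∑ i, g (e i) n • e i) - g u n • u) :
    ∑ i, g (e i) n ^ 2 = 1 := by
  have hgn := congrArg (fun v => g v n) hn
  simpa [hnn, hun, sq] using hgn.symm

theorem bilin_sub_smul_eq_projector {V ι : Type*} [AddCommGroup V] [Module ℝ V] [DecidableEq ι]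
    (g : V →ₗ[ℝ] V →ₗ[ℝ] ℝ) (n : V) (e : ι → V)
    (hee : ∀ i j, g (e i) (e j) = if i = j then (1 : ℝ) else 0) (x h : ι) :
    g (e x) (e h - g (e h) n • n) = (if x = h then 1 else 0) - g (e x) n * g (e h) n := by
  rw [map_sub, map_smul, hee, smul_eq_mul, mul_comm]

theorem strain_rate_eigenvalues_from_tangential_projections_general
    {V : Type*} [AddCommGroup V] [Module ℝ V]
    (g : V →ₗ[ℝ] V →ₗ[ℝ] ℝ)
    (u n : V) (hnn : g n n = 1) (hun : g u n = 0)
    (e : Fin 3 → V)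
    (hee : ∀ i j, g (e i) (e j) = if i = j then (1 : ℝ) else 0)
    (hcomplete : ∀ v : V, v = (∑ i, g (e i) v • e i) - g u v • u)
    (hni : ∀ i, g (e i) n ≠ 0)
    (φ : Fin 3 → ℝ) (S : V → V → ℝ)
    (hS : ∀ v w, S v w = ∑ i, 2 * φ i * g (e i) v * g (e i) w) :
    ∀ i j k : Fin 3, i ≠ j → j ≠ k → i ≠ k →
      2 * φ i
        = (∑ h, S (e h - g (e h) n • n) (e h - g (e h) n • n))
          + (1 / (g (e j) n * g (e k) n))
            * S (e j - g (e j) n • n) (e k - g (e k) n • n) := by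
  intro i j k hij hjk hik
  have hsq : ∑ x, g (e x) n ^ 2 = 1 :=
    sum_sq_apply_eq_one_of_expansion g u n e hnn hun (hcomplete n)
  simp only [hS, bilin_sub_smul_eq_projector g n e hee]
  rw [sum_mul_projector_sq_eq _ _ hsq, sum_mul_projector_of_ne _ (fun x => g (e x) n) hjk,
    one_div, inv_mul_cancel_left₀ (mul_ne_zero (hni j) (hni k)),
    Fin.sum_univ_three_of_ne _ hij hjk hik]
  ring

/-- key identity of Proposition 6: in a 4-dimensional Lorentzian
space with unit timelike u, unit spacelike n orthogonal to u, an orthonormal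
triad e₁,e₂,e₃ of u^⊥ (completing, with u, a frame of V), and the strain rate
Σ = Σ_i 2φ_i ω^i ⊗ ω^i (ω^i dual to e_i) with Σ(u,·) = 0, writing
e_i = e_i^⊤ + n_i·n with n_i = g(e_i,n) ≠ 0, one has for i ≠ j ≠ k:
2φ_i = Σ_{h,l} Σ(e_h^⊤,e_l^⊤) δ^{hl} + (1/(n_j n_k))·Σ(e_j^⊤,e_k^⊤). -/
theorem strain_rate_eigenvalues_from_tangential_projections
    {V : Type*} [AddCommGroup V] [Module ℝ V]
    (g : V →ₗ[ℝ] V →ₗ[ℝ] ℝ) (hgsymm : ∀ v w, g v w = g w v)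
    (u n : V) (huu : g u u = -1) (hnn : g n n = 1) (hun : g u n = 0)
    (e : Fin 3 → V)
    (hee : ∀ i j, g (e i) (e j) = if i = j then (1 : ℝ) else 0)
    (heu : ∀ i, g (e i) u = 0)
    (hcomplete : ∀ v : V, v = (∑ i, g (e i) v • e i) - g u v • u)
    (hni : ∀ i, g (e i) n ≠ 0)
    (φ : Fin 3 → ℝ) (S : V → V → ℝ)
    (hSsymm : ∀ v w, S v w = S w v) (hSu : ∀ v, S u v = 0)
    (hS : ∀ v w, S v w = ∑ i, 2 * φ i * g (e i) v * g (e i) w) :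
    ∀ i j k : Fin 3, i ≠ j → j ≠ k → i ≠ k →
      2 * φ i
        = (∑ h, S (e h - g (e h) n • n) (e h - g (e h) n • n))
          + (1 / (g (e j) n * g (e k) n))
            * S (e j - g (e j) n • n) (e k - g (e k) n • n) :=
  strain_rate_eigenvalues_from_tangential_projections_general g u n hnn hun e hee hcomplete hni φ S
    hS
end
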